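/- Let K, L : ℝ^{n+1} → ℝ^{n+1} be skew-symmetric linear maps and let T ∈ GL(n+1,ℝ). Let p ∈ S^n be a unit vector and let v, w ∈ ℝ^{n+1} be orthogonal to p. Set q = Tp/|Tp| and, for u ∈ ℝ^{n+1} orthogonal to p, set Φ(u) = (1/|Tp|)(Tu − (⟨Tu,Tp⟩/|Tp|²)Tp) (the differential of φ(T) at p). Then ⟨K(q), Φ(v)⟩·⟨L(q), Φ(w)⟩ + ⟨L(q), Φ(v)⟩·⟨K(q), Φ(w)⟩ = (1/|Tp|⁴)·(⟨TᵀKTp, v⟩·⟨TᵀLTp, w⟩ + ⟨TᵀLTp, v⟩·⟨TᵀKTp, w⟩), where Tᵀ is the transpose of T. (That is, the pullback by φ(T) of the Killing symmetric two-tensor K⊙L at p equals (det T)^{4/(n+1)}/|Tp|⁴ times ((K⊙L)·T) at p.) -/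
import Mathlib


open scoped RealInnerProductSpace

/-- Pullback of the Killing symmetric two-tensor `K ⊙ L` by `φ(T)`: with `q = Tp/‖Tp‖`
and `Φ(u) = (1/‖Tp‖)(Tu − (⟪Tu,Tp⟫/‖Tp‖²) Tp)` the differential of `φ(T)` at `p`, one has
`⟪Kq, Φv⟫⟪Lq, Φw⟫ + ⟪Lq, Φv⟫⟪Kq, Φw⟫
  = ‖Tp‖⁻⁴ (⟪TᵀKTp, v⟫⟪TᵀLTp, w⟫ + ⟪TᵀLTp, v⟫⟪TᵀKTp, w⟫)`. -/
theorem stmt11 (n : ℕ)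
    (K L T : EuclideanSpace ℝ (Fin (n + 1)) →ₗ[ℝ] EuclideanSpace ℝ (Fin (n + 1)))
    (hK : ∀ x y : EuclideanSpace ℝ (Fin (n + 1)), ⟪K x, y⟫ = -⟪x, K y⟫)
    (hL : ∀ x y : EuclideanSpace ℝ (Fin (n + 1)), ⟪L x, y⟫ = -⟪x, L y⟫)
    (hT : Function.Bijective T)
    (p v w : EuclideanSpace ℝ (Fin (n + 1)))
    (hp : ‖p‖ = 1) (hv : ⟪p, v⟫ = 0) (hw : ⟪p, w⟫ = 0) :
    ⟪K (‖T p‖⁻¹ • T p), ‖T p‖⁻¹ • (T v - (⟪T v, T p⟫ / ‖T p‖ ^ 2) • T p)⟫ *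
        ⟪L (‖T p‖⁻¹ • T p), ‖T p‖⁻¹ • (T w - (⟪T w, T p⟫ / ‖T p‖ ^ 2) • T p)⟫ +
      ⟪L (‖T p‖⁻¹ • T p), ‖T p‖⁻¹ • (T v - (⟪T v, T p⟫ / ‖T p‖ ^ 2) • T p)⟫ *
        ⟪K (‖T p‖⁻¹ • T p), ‖T p‖⁻¹ • (T w - (⟪T w, T p⟫ / ‖T p‖ ^ 2) • T p)⟫
    = (‖T p‖ ^ 4)⁻¹ *
        (⟪LinearMap.adjoint T (K (T p)), v⟫ * ⟪LinearMap.adjoint T (L (T p)), w⟫ +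
          ⟪LinearMap.adjoint T (L (T p)), v⟫ * ⟪LinearMap.adjoint T (K (T p)), w⟫) := by
  have key : ∀ (M : EuclideanSpace ℝ (Fin (n + 1)) →ₗ[ℝ] EuclideanSpace ℝ (Fin (n + 1))),
      (∀ x y : EuclideanSpace ℝ (Fin (n + 1)), ⟪M x, y⟫ = -⟪x, M y⟫) →
      ∀ u : EuclideanSpace ℝ (Fin (n + 1)),
      ⟪M (‖T p‖⁻¹ • T p), ‖T p‖⁻¹ • (T u - (⟪T u, T p⟫ / ‖T p‖ ^ 2) • T p)⟫
        = (‖T p‖ ^ 2)⁻¹ * ⟪LinearMap.adjoint T (M (T p)), u⟫ := by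
    intro M hM u
    have hMz : ⟪M (T p), T p⟫ = 0 := by
      have := hM (T p) (T p)
      have h2 : ⟪T p, M (T p)⟫ = ⟪M (T p), T p⟫ := real_inner_comm _ _
      linarith [this, h2 ▸ this]
    rw [map_smul, inner_smul_left, inner_smul_right, inner_sub_right, inner_smul_right,
      LinearMap.adjoint_inner_left]
    simp only [hMz, starRingEnd_apply, star_trivial]
    ring
  rw [key K hK v, key K hK w, key L hL v, key L hL w]
  ring
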